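/- Let R be a commutative ring with nonzero identity, δ an expansion function of the ideals of R, and I a maximal ideal of R with δ(I) ≠ R. Then I is a δ-J-ideal of R if and only if I = J(R). -/

import Mathlib

/-- A proper ideal `I` is a `δ`-`J`-ideal if whenever `a * b ∈ I`,
then `a ∈ J(R)` or `b ∈ δ I`. -/
def IsDeltaJIdeal {R : Type*} [CommRing R] (δ : Ideal R → Ideal R) (I : Ideal R) : Prop :=
  I ≠ ⊤ ∧ ∀ a b : R, a * b ∈ I → a ∈ (⊥ : Ideal R).jacobson ∨ b ∈ δ I

section

variable {R : Type*} [CommRing R] {δ : Ideal R → Ideal R} {I : Ideal R}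

theorem IsDeltaJIdeal.le_jacobson_bot (h : IsDeltaJIdeal δ I) (hδI : δ I ≠ ⊤) :
    I ≤ (⊥ : Ideal R).jacobson := by
  intro a ha
  refine (h.2 a 1 (by rwa [mul_one])).resolve_right fun h1 => hδI ?_
  exact (Ideal.eq_top_iff_one _).mpr h1

theorem Ideal.IsPrime.isDeltaJIdeal_of_le_jacobson_bot (hI : I.IsPrime) (hexp : I ≤ δ I)
    (hJ : I ≤ (⊥ : Ideal R).jacobson) : IsDeltaJIdeal δ I := by
  refine ⟨hI.ne_top, fun a b hab => ?_⟩
  rcases hI.mem_or_mem hab with ha | hb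
  · exact Or.inl (hJ ha)
  · exact Or.inr (hexp hb)

theorem Ideal.IsMaximal.jacobson_bot_le (hI : I.IsMaximal) : (⊥ : Ideal R).jacobson ≤ I :=
  sInf_le ⟨bot_le, hI⟩

end

theorem maximal_deltaJ_iff_eq_jacobson_general {R : Type*} [CommRing R]
    (δ : Ideal R → Ideal R)
    (hexp : ∀ I : Ideal R, I ≤ δ I)
    (I : Ideal R) (hmax : I.IsMaximal) (hδI : δ I ≠ ⊤) :
    IsDeltaJIdeal δ I ↔ I = (⊥ : Ideal R).jacobson := by
  constructor
  · intro h
    exact le_antisymm (h.le_jacobson_bot hδI) hmax.jacobson_bot_le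
  · intro h
    exact hmax.isPrime.isDeltaJIdeal_of_le_jacobson_bot (hexp I) h.le

theorem maximal_deltaJ_iff_eq_jacobson {R : Type*} [CommRing R] [Nontrivial R]
    (δ : Ideal R → Ideal R)
    (hexp : ∀ I : Ideal R, I ≤ δ I)
    (hmono : ∀ I J : Ideal R, I ≤ J → δ I ≤ δ J)
    (I : Ideal R) (hmax : I.IsMaximal) (hδI : δ I ≠ ⊤) :
    IsDeltaJIdeal δ I ↔ I = (⊥ : Ideal R).jacobson :=
  maximal_deltaJ_iff_eq_jacobson_general δ hexp I hmax hδI
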